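/- In flat Euclidean space ℝⁿ, a smooth curve satisfying the parametrized conformal circle equation γ''' = 3(⟨γ',γ''⟩/⟨γ',γ'⟩)γ'' − (3⟨γ'',γ''⟩/(2⟨γ',γ'⟩))γ' with initial data γ(0), γ'(0) ≠ 0, and γ''(0) parallel to γ'(0) is contained in a straight line. -/

import Mathlib

open scoped RealInnerProductSpace

/-!
Write `v = γ'` and `a = γ''`. Along the conformal circle equation the Gram determinant
`|v|²|a|² - ⟨v, a⟩²` solves the linear equation `G' = (6⟨v, a⟩/|v|²) G`, so it vanishes identically,
as it does at `0`. Hence `γ'' = μ γ'` with `μ = ⟨v, a⟩/|v|²`, so `γ' = exp (∫ μ) • γ'(0)` keeps a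
fixed direction and `γ` stays on the line through `γ(0)` in that direction.
-/

theorem eq_exp_integral_smul_of_hasDerivAt {E : Type*} [NormedAddCommGroup E] [NormedSpace ℝ E]
    {w : ℝ → E} {g : ℝ → ℝ} (hg : Continuous g) (hw : ∀ t, HasDerivAt w (g t • w t) t)
    (τ : ℝ) : w τ = Real.exp (∫ t in (0 : ℝ)..τ, g t) • w 0 := by
  set G : ℝ → ℝ := fun τ => ∫ t in (0 : ℝ)..τ, g t
  have hG : ∀ t, HasDerivAt G (g t) t := fun t => (hg.integral_hasStrictDerivAt 0 t).hasDerivAt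
  have hderiv : ∀ t, HasDerivAt (fun t => Real.exp (-G t) • w t) 0 t := by
    intro t
    refine (((hG t).neg.exp).smul (hw t)).congr_deriv ?_
    rw [smul_smul, ← add_smul]
    ring_nf
    simp
  have hconst := is_const_of_deriv_eq_zero (fun t => (hderiv t).differentiableAt)
    (fun t => (hderiv t).deriv) τ 0
  simp only [G, intervalIntegral.integral_same, neg_zero, Real.exp_zero, one_smul] at hconst
  rw [← hconst, smul_smul, ← Real.exp_add, add_neg_cancel, Real.exp_zero, one_smul]

theorem eq_add_integral_smul_of_hasDerivAt {E : Type*} [NormedAddCommGroup E] [NormedSpace ℝ E]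
    {γ : ℝ → E} {c : ℝ → ℝ} {w : E} (hc : Continuous c)
    (hγ : ∀ t, HasDerivAt γ (c t • w) t) (τ : ℝ) :
    γ τ = γ 0 + (∫ t in (0 : ℝ)..τ, c t) • w := by
  set C : ℝ → ℝ := fun τ => ∫ t in (0 : ℝ)..τ, c t
  have hC : ∀ t, HasDerivAt C (c t) t := fun t => (hc.integral_hasStrictDerivAt 0 t).hasDerivAt
  have hderiv : ∀ t, HasDerivAt (fun t => γ t - C t • w) 0 t := fun t =>
    ((hγ t).sub ((hC t).smul_const w)).congr_deriv (sub_self _)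
  have hconst := is_const_of_deriv_eq_zero (fun t => (hderiv t).differentiableAt)
    (fun t => (hderiv t).deriv) τ 0
  simp only [C, intervalIntegral.integral_same, zero_smul, sub_zero] at hconst
  rw [← hconst, sub_add_cancel]

theorem ContDiff.hasDerivAt_iteratedDeriv {𝕜 E : Type*} [NontriviallyNormedField 𝕜]
    [NormedAddCommGroup E] [NormedSpace 𝕜 E] {f : 𝕜 → E} (hf : ContDiff 𝕜 (⊤ : ℕ∞) f)
    (k : ℕ) (t : 𝕜) :
    HasDerivAt (iteratedDeriv k f) (iteratedDeriv (k + 1) f t) t := by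
  rw [iteratedDeriv_succ]
  exact (hf.differentiable_iteratedDeriv k (mod_cast ENat.natCast_lt_top k) t).hasDerivAt

section InnerProduct

variable {E : Type*} [NormedAddCommGroup E] [InnerProductSpace ℝ E]

noncomputable def gram (v a : E) : ℝ :=
  ⟪v, v⟫ * ⟪a, a⟫ - ⟪v, a⟫ ^ 2

theorem eq_smul_of_gram_eq_zero {v a : E} (hv : v ≠ 0) (h : gram v a = 0) :
    a = (⟪v, a⟫ / ⟪v, v⟫) • v := by
  have hP : ⟪v, v⟫ ≠ 0 := inner_self_ne_zero.mpr hv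
  unfold gram at h
  rw [← sub_eq_zero, ← inner_self_eq_zero (𝕜 := ℝ)]
  simp only [inner_sub_left, inner_sub_right, real_inner_smul_left, real_inner_smul_right,
    real_inner_comm v a]
  field_simp
  linear_combination h

theorem hasDerivAt_gram {v a : ℝ → E} {b : E} {τ : ℝ} (hv : HasDerivAt v (a τ) τ)
    (ha : HasDerivAt a b τ) :
    HasDerivAt (fun t => gram (v t) (a t))
      (2 * (⟪v τ, v τ⟫ * ⟪a τ, b⟫ - ⟪v τ, a τ⟫ * ⟪v τ, b⟫)) τ := by
  refine (((hv.inner ℝ hv).mul (ha.inner ℝ ha)).sub ((hv.inner ℝ ha).pow 2)).congr_deriv ?_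
  rw [real_inner_comm b, real_inner_comm (a τ) (v τ)]
  ring

/-- The right-hand side of the flat conformal circle equation `γ''' = conformalCircleRHS γ' γ''`. -/
noncomputable def conformalCircleRHS (v a : E) : E :=
  (3 * (⟪v, a⟫ / ⟪v, v⟫)) • a - (3 * ⟪a, a⟫ / (2 * ⟪v, v⟫)) • v

theorem gram_deriv_conformalCircleRHS {v a : E} (hv : ⟪v, v⟫ ≠ 0) :
    2 * (⟪v, v⟫ * ⟪a, conformalCircleRHS v a⟫ - ⟪v, a⟫ * ⟪v, conformalCircleRHS v a⟫)
      = 6 * ⟪v, a⟫ / ⟪v, v⟫ * gram v a := by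
  simp only [gram, conformalCircleRHS, inner_sub_right, real_inner_smul_right,
    real_inner_comm a v]
  field_simp
  ring

end InnerProduct

theorem stmt6 (n : ℕ)
    (γ : ℝ → EuclideanSpace ℝ (Fin n)) (hsm : ContDiff ℝ (⊤ : ℕ∞) γ)
    (hreg : ∀ τ : ℝ, deriv γ τ ≠ 0)
    (heq : ∀ τ : ℝ,
      iteratedDeriv 3 γ τ
        = (3 * (⟪deriv γ τ, iteratedDeriv 2 γ τ⟫ / ⟪deriv γ τ, deriv γ τ⟫))
            • iteratedDeriv 2 γ τ
          - (3 * ⟪iteratedDeriv 2 γ τ, iteratedDeriv 2 γ τ⟫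
              / (2 * ⟪deriv γ τ, deriv γ τ⟫)) • deriv γ τ)
    (lam : ℝ) (hpar : iteratedDeriv 2 γ 0 = lam • deriv γ 0) :
    ∀ τ : ℝ, ∃ t : ℝ, γ τ = γ 0 + t • deriv γ 0 := by
  set v := deriv γ
  set a := iteratedDeriv 2 γ
  have hγ (t : ℝ) : HasDerivAt γ (v t) t := by
    simpa only [iteratedDeriv_zero, zero_add, iteratedDeriv_one] using
      hsm.hasDerivAt_iteratedDeriv 0 t
  have hv (t : ℝ) : HasDerivAt v (a t) t := by
    simpa only [iteratedDeriv_one] using hsm.hasDerivAt_iteratedDeriv 1 t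
  have ha (t : ℝ) : HasDerivAt a (conformalCircleRHS (v t) (a t)) t :=
    (hsm.hasDerivAt_iteratedDeriv 2 t).congr_deriv (heq t)
  have hvv (t : ℝ) : ⟪v t, v t⟫ ≠ 0 := inner_self_ne_zero.mpr (hreg t)
  have hv_cont : Continuous v := continuous_iff_continuousAt.2 fun t => (hv t).continuousAt
  have ha_cont : Continuous a := continuous_iff_continuousAt.2 fun t => (ha t).continuousAt
  have hgram (τ : ℝ) : gram (v τ) (a τ) = 0 := by
    rw [eq_exp_integral_smul_of_hasDerivAt (w := fun t => gram (v t) (a t))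
      (by fun_prop (disch := exact hvv))
      (fun t => (hasDerivAt_gram (hv t) (ha t)).congr_deriv
        (gram_deriv_conformalCircleRHS (hvv t))) τ, smul_eq_zero]
    right
    simp only [gram, hpar, real_inner_smul_left, real_inner_smul_right]
    ring
  have hμ : Continuous fun t => ⟪v t, a t⟫ / ⟪v t, v t⟫ := by fun_prop (disch := exact hvv)
  have hv_eq (τ : ℝ) := eq_exp_integral_smul_of_hasDerivAt hμ
    (fun t => eq_smul_of_gram_eq_zero (hreg t) (hgram t) ▸ hv t) τ
  have hexp : Continuous fun τ => Real.exp (∫ t in (0 : ℝ)..τ, ⟪v t, a t⟫ / ⟪v t, v t⟫) :=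
    (intervalIntegral.continuous_primitive (fun _ _ => hμ.intervalIntegrable _ _) 0).rexp
  exact fun τ => ⟨_, eq_add_integral_smul_of_hasDerivAt hexp (fun t => hv_eq t ▸ hγ t) τ⟩
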